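/- Let (X, I, q, g) be a deterministic commutative MDP such that for every x ∈ X the MDP starting at x has a uniform value in pure strategies v*(x). Then for every x₁ ∈ X there exists a partially 0-optimal pure strategy: a pure strategy a ∈ I^ℕ such that limsup_{n→∞} γ_n(x₁, a) = v*(x₁). -/

import Mathlib

/-!
Values cannot increase along plays, since a strategy from a reachable state can be prefixed by the
path leading there and average payoffs forget finite prefixes; and along an `ε`-optimal play they
stay above `v x - ε`. By Dickson's lemma, among the endpoints of longer and longer near-optimal
finite plays from `x` there is an infinite chain in which, by commutativity, every state is
reachable from the previous ones, so all their values equal `v x`. Hence from every state one can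
play an arbitrarily long `ε`-optimal block and land in a state of the same value. Concatenating such
blocks, with `ε → 0` and each block much longer than everything played before it, makes the average
payoff at the end of every block close to `v x₁`, so the limsup of the average payoffs is `v x₁`.
-/

open Filter Topology

noncomputable section

/-- The play induced by an initial state `x₁` and a pure strategy `a` in a deterministic MDP:
`x₀ = x₁` and `x_{t+1} = q (x_t) (a t)`. -/
def play {X I : Type*} (q : X → I → X) (x₁ : X) (a : ℕ → I) : ℕ → X
  | 0 => x₁
  | t + 1 => q (play q x₁ a t) (a t)

/-- The `n`-stage average payoff `γ_n(x₁, a)`. -/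
def payoff {X I : Type*} (q : X → I → X) (g : X → I → ℝ) (x₁ : X) (a : ℕ → I) (n : ℕ) : ℝ :=
  (1 / (n : ℝ)) * ∑ t ∈ Finset.range n, g (play q x₁ a t) (a t)

/-- The `n`-stage value `v_n(x₁)`. -/
def nValue {X I : Type*} (q : X → I → X) (g : X → I → ℝ) (x₁ : X) (n : ℕ) : ℝ :=
  ⨆ a : ℕ → I, payoff q g x₁ a n

/-- The MDP starting at `x₁` has a uniform value `v` in pure strategies. -/
def HasUniformValuePure {X I : Type*} (q : X → I → X) (g : X → I → ℝ) (x₁ : X) (v : ℝ) : Prop :=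
  (∀ ε > (0 : ℝ), ∃ a : ℕ → I, v - ε ≤ liminf (fun n => payoff q g x₁ a n) atTop) ∧
    limsup (fun n => nValue q g x₁ n) atTop ≤ v

theorem Filter.liminf_le_liminf_of_tendsto_sub {ι : Type*} {f : Filter ι} [f.NeBot]
    {u w : ι → ℝ} (hw₁ : IsBoundedUnder (· ≤ ·) f w) (hw₂ : IsBoundedUnder (· ≥ ·) f w)
    (h : Tendsto (fun i => u i - w i) f (𝓝 0)) : liminf w f ≤ liminf u f := by
  have := le_liminf_add hw₂ hw₁ h.isBoundedUnder_ge h.isCoboundedUnder_ge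
  rwa [h.liminf_eq, add_zero, show (w + fun i => u i - w i) = u by ext; simp] at this

theorem Filter.liminf_eq_liminf_of_tendsto_sub {ι : Type*} {f : Filter ι} [f.NeBot]
    {u w : ι → ℝ} (hu₁ : IsBoundedUnder (· ≤ ·) f u) (hu₂ : IsBoundedUnder (· ≥ ·) f u)
    (hw₁ : IsBoundedUnder (· ≤ ·) f w) (hw₂ : IsBoundedUnder (· ≥ ·) f w)
    (h : Tendsto (fun i => u i - w i) f (𝓝 0)) : liminf u f = liminf w f :=
  le_antisymm (liminf_le_liminf_of_tendsto_sub hu₁ hu₂ (by simpa using h.neg))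
    (liminf_le_liminf_of_tendsto_sub hw₁ hw₂ h)

theorem Filter.le_limsup_of_tendsto_of_le_comp {u l : ℕ → ℝ} {T : ℕ → ℕ} {c : ℝ}
    (hT : Tendsto T atTop atTop) (hu : IsBoundedUnder (· ≤ ·) atTop u)
    (hl : Tendsto l atTop (𝓝 c)) (hle : ∀ k, l k ≤ u (T k)) : c ≤ limsup u atTop :=
  le_of_forall_lt_imp_le_of_dense fun _ hc => le_limsup_of_frequently_le (hT.frequently
    ((hl.eventually (lt_mem_nhds hc)).mono fun k hk => hk.le.trans (hle k)).frequently) hu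

instance Multiset.wellQuasiOrderedLE {α : Type*} [Finite α] : WellQuasiOrderedLE (Multiset α) := by
  classical
  exact Finsupp.orderIsoMultiset.wellQuasiOrderedLE_iff.mp inferInstance

section DeterministicMDP

variable {X I : Type*} {q : X → I → X} {g : X → I → ℝ}

theorem play_congr {x : X} {a b : ℕ → I} {n : ℕ} (h : ∀ t < n, a t = b t) :
    play q x a n = play q x b n := by
  induction n with
  | zero => rfl
  | succ n ih => rw [play, play, ih fun t ht => h t (by omega), h n (by omega)]

theorem play_add (x : X) (a : ℕ → I) (m n : ℕ) :
    play q x a (m + n) = play q (play q x a m) (fun t => a (m + t)) n := by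
  induction n with
  | zero => rfl
  | succ n ih => rw [← Nat.add_assoc, play, play, ih]

theorem play_eq_foldl (x : X) (a : ℕ → I) (n : ℕ) :
    play q x a n = ((List.range n).map a).foldl q x := by
  induction n with
  | zero => rfl
  | succ n ih => rw [List.range_succ, List.map_append, List.foldl_append, play, ih]; rfl

theorem play_getD_length (x : X) (w : List I) (i : I) :
    play q x (fun t => w.getD t i) w.length = w.foldl q x := by
  rw [play_eq_foldl]
  congr
  refine List.ext_getElem (by simp) fun t _ ht => ?_
  simp [List.getElem?_eq_getElem ht]

def splice (a b : ℕ → I) (m t : ℕ) : I :=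
  if t < m then a t else b (t - m)

theorem play_splice (x : X) (a b : ℕ → I) (m : ℕ) : play q x (splice a b m) m = play q x a m :=
  play_congr fun _ ht => if_pos ht

theorem splice_add (a b : ℕ → I) (m : ℕ) : (fun t => splice a b m (m + t)) = b := by
  funext t
  simp [splice]

def payoffSum (q : X → I → X) (g : X → I → ℝ) (x : X) (a : ℕ → I) (n : ℕ) : ℝ :=
  ∑ t ∈ Finset.range n, g (play q x a t) (a t)

theorem payoff_mul_natCast (x : X) (a : ℕ → I) (n : ℕ) :
    payoff q g x a n * n = payoffSum q g x a n := by
  rcases n.eq_zero_or_pos with rfl | hn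
  · simp [payoffSum]
  · rw [payoff, payoffSum]
    field_simp

theorem payoffSum_add (x : X) (a : ℕ → I) (m n : ℕ) :
    payoffSum q g x a (m + n) =
      payoffSum q g x a m + payoffSum q g (play q x a m) (fun t => a (m + t)) n := by
  simp only [payoffSum, Finset.sum_range_add, play_add]

theorem payoffSum_congr {x : X} {a b : ℕ → I} {n : ℕ} (h : ∀ t < n, a t = b t) :
    payoffSum q g x a n = payoffSum q g x b n :=
  Finset.sum_congr rfl fun t ht => by
    have ht := Finset.mem_range.mp ht
    rw [play_congr fun s hs => h s (hs.trans ht), h t ht]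

theorem payoffSum_nonneg (hg : ∀ x i, g x i ∈ Set.Icc (0 : ℝ) 1) (x : X) (a : ℕ → I) (n : ℕ) :
    0 ≤ payoffSum q g x a n :=
  Finset.sum_nonneg fun _ _ => (hg _ _).1

theorem payoffSum_le (hg : ∀ x i, g x i ∈ Set.Icc (0 : ℝ) 1) (x : X) (a : ℕ → I) (n : ℕ) :
    payoffSum q g x a n ≤ n := by
  calc payoffSum q g x a n ≤ ∑ _t ∈ Finset.range n, (1 : ℝ) :=
        Finset.sum_le_sum fun t _ => (hg (play q x a t) (a t)).2
    _ = n := by simp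

theorem payoff_nonneg (hg : ∀ x i, g x i ∈ Set.Icc (0 : ℝ) 1) (x : X) (a : ℕ → I) (n : ℕ) :
    0 ≤ payoff q g x a n :=
  mul_nonneg (by positivity) (payoffSum_nonneg hg x a n)

theorem payoff_le_one (hg : ∀ x i, g x i ∈ Set.Icc (0 : ℝ) 1) (x : X) (a : ℕ → I) (n : ℕ) :
    payoff q g x a n ≤ 1 := by
  rcases n.eq_zero_or_pos with rfl | hn
  · simp [payoff]
  · rw [← mul_le_mul_iff_of_pos_right (Nat.cast_pos.mpr hn), payoff_mul_natCast, one_mul]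
    exact payoffSum_le hg x a n

theorem abs_payoff_add_sub_le (hg : ∀ x i, g x i ∈ Set.Icc (0 : ℝ) 1) (x : X) (a : ℕ → I)
    (m n : ℕ) :
    |payoff q g x a (m + n) - payoff q g (play q x a m) (fun t => a (m + t)) n| ≤
      m / (m + n) := by
  rcases (m + n).eq_zero_or_pos with h | h
  · obtain ⟨rfl, rfl⟩ : m = 0 ∧ n = 0 := by omega
    simp [payoff]
  have hpos : (0 : ℝ) < m + n := by exact_mod_cast h
  set p' := payoff q g (play q x a m) (fun t => a (m + t)) n
  have key : (payoff q g x a (m + n) - p') * (m + n) = payoffSum q g x a m - p' * m := by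
    have := payoffSum_add (q := q) (g := g) x a m n
    rw [← payoff_mul_natCast x a (m + n), ← payoff_mul_natCast (play q x a m) _ n,
      Nat.cast_add] at this
    linear_combination this
  have hS := payoffSum_le (q := q) hg x a m
  have hS₀ := payoffSum_nonneg (q := q) hg x a m
  have hp' : p' ≤ 1 := payoff_le_one hg _ _ _
  have hp'₀ : 0 ≤ p' := payoff_nonneg hg _ _ _
  rw [le_div_iff₀ hpos, ← abs_of_pos hpos, ← abs_mul, key, abs_le]
  constructor <;> nlinarith

theorem liminf_payoff_shift (hg : ∀ x i, g x i ∈ Set.Icc (0 : ℝ) 1) (x : X) (a : ℕ → I) (m : ℕ) :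
    liminf (fun n => payoff q g (play q x a m) (fun t => a (m + t)) n) atTop =
      liminf (fun n => payoff q g x a n) atTop := by
  rw [← liminf_nat_add (fun n => payoff q g x a n) m]
  refine liminf_eq_liminf_of_tendsto_sub (isBoundedUnder_of ⟨1, fun n => payoff_le_one hg _ _ n⟩)
    (isBoundedUnder_of ⟨0, fun n => payoff_nonneg hg _ _ n⟩)
    (isBoundedUnder_of ⟨1, fun n => payoff_le_one hg _ _ _⟩)
    (isBoundedUnder_of ⟨0, fun n => payoff_nonneg hg _ _ _⟩) ?_
  refine squeeze_zero_norm (a := fun n : ℕ => (m : ℝ) / (m + n)) (fun n => ?_) ?_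
  · rw [Real.norm_eq_abs, abs_sub_comm, add_comm n m]
    exact abs_payoff_add_sub_le hg x a m n
  · exact tendsto_const_nhds.div_atTop
      (tendsto_atTop_add_const_left atTop _ tendsto_natCast_atTop_atTop)

theorem payoff_le_nValue (hg : ∀ x i, g x i ∈ Set.Icc (0 : ℝ) 1) (x : X) (a : ℕ → I) (n : ℕ) :
    payoff q g x a n ≤ nValue q g x n :=
  le_ciSup (f := fun b => payoff q g x b n)
    ⟨1, by rintro _ ⟨b, rfl⟩; exact payoff_le_one hg x b n⟩ a

namespace HasUniformValuePure

variable {x : X} {w : ℝ}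

theorem limsup_payoff_le (hx : HasUniformValuePure q g x w)
    (hg : ∀ x i, g x i ∈ Set.Icc (0 : ℝ) 1) (a : ℕ → I) :
    limsup (fun n => payoff q g x a n) atTop ≤ w :=
  (limsup_le_limsup (Eventually.of_forall fun n => payoff_le_nValue hg x a n)
    (isBoundedUnder_of ⟨0, payoff_nonneg hg x a⟩).isCoboundedUnder_le
    (isBoundedUnder_of ⟨1, fun n => Real.iSup_le (payoff_le_one hg x · n) zero_le_one⟩)).trans
      hx.2

theorem liminf_payoff_le (hx : HasUniformValuePure q g x w)
    (hg : ∀ x i, g x i ∈ Set.Icc (0 : ℝ) 1) (a : ℕ → I) :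
    liminf (fun n => payoff q g x a n) atTop ≤ w :=
  (liminf_le_limsup (isBoundedUnder_of ⟨1, payoff_le_one hg x a⟩)
    (isBoundedUnder_of ⟨0, payoff_nonneg hg x a⟩)).trans (hx.limsup_payoff_le hg a)

theorem le_one (hx : HasUniformValuePure q g x w) (hg : ∀ x i, g x i ∈ Set.Icc (0 : ℝ) 1) :
    w ≤ 1 := by
  refine le_of_forall_pos_le_add fun ε hε => ?_
  obtain ⟨a, ha⟩ := hx.1 ε hε
  have : liminf (fun n => payoff q g x a n) atTop ≤ 1 :=
    liminf_le_of_frequently_le (Frequently.of_forall fun n => payoff_le_one hg x a n)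
      (isBoundedUnder_of ⟨0, payoff_nonneg hg x a⟩)
  linarith

end HasUniformValuePure

def Reachable (q : X → I → X) (x y : X) : Prop :=
  ∃ (a : ℕ → I) (n : ℕ), play q x a n = y

section Value

variable {v : X → ℝ}

theorem value_le_of_reachable (hg : ∀ x i, g x i ∈ Set.Icc (0 : ℝ) 1)
    (hv : ∀ x, HasUniformValuePure q g x (v x)) {x y : X} (h : Reachable q x y) :
    v y ≤ v x := by
  obtain ⟨a, n, rfl⟩ := h
  refine le_of_forall_pos_le_add fun ε hε => ?_
  obtain ⟨b, hb⟩ := (hv _).1 ε hε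
  have := (hv x).liminf_payoff_le hg (splice a b n)
  rw [← liminf_payoff_shift hg x _ n, play_splice, splice_add] at this
  linarith

theorem le_value_play (hg : ∀ x i, g x i ∈ Set.Icc (0 : ℝ) 1)
    (hv : ∀ x, HasUniformValuePure q g x (v x)) {x : X} {b : ℕ → I} {c : ℝ}
    (hb : c ≤ liminf (fun n => payoff q g x b n) atTop) (t : ℕ) : c ≤ v (play q x b t) := by
  have := (hv (play q x b t)).liminf_payoff_le hg (fun s => b (t + s))
  rw [liminf_payoff_shift hg] at this
  linarith

theorem value_eq_of_reachable_chain (hg : ∀ x i, g x i ∈ Set.Icc (0 : ℝ) 1)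
    (hv : ∀ x, HasUniformValuePure q g x (v x)) {x : X} {y : ℕ → X} {δ : ℕ → ℝ}
    (hδ : Tendsto δ atTop (𝓝 0)) (hxy : ∀ j, Reachable q x (y j))
    (hy : ∀ j j', j ≤ j' → Reachable q (y j) (y j')) (hlow : ∀ j, v x - δ j ≤ v (y j)) (j : ℕ) :
    v (y j) = v x :=
  le_antisymm (value_le_of_reachable hg hv (hxy j)) <|
    le_of_tendsto (by simpa using tendsto_const_nhds.sub hδ) <|
      eventually_atTop.2 ⟨j, fun j' hj' =>
        (hlow j').trans (value_le_of_reachable hg hv (hy j j' hj'))⟩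

end Value

theorem reachable_play_of_map_range_le [Nonempty I]
    (hcomm : ∀ x i i', q (q x i) i' = q (q x i') i) {x : X} {a b : ℕ → I} {m n : ℕ}
    (h : (Multiset.range m).map a ≤ (Multiset.range n).map b) :
    Reachable q (play q x a m) (play q x b n) := by
  classical
  set u := ((Multiset.range n).map b - (Multiset.range m).map a).toList
  refine ⟨fun t => u.getD t (Classical.arbitrary I), u.length, ?_⟩
  rw [play_getD_length, play_eq_foldl x a m, play_eq_foldl x b n, ← List.foldl_append]
  refine List.Perm.foldl_eq' (Multiset.coe_eq_coe.mp ?_) (fun i _ i' _ z => hcomm z i i') x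
  rw [← Multiset.coe_add, Multiset.coe_toList, ← Multiset.map_coe, ← Multiset.map_coe,
    Multiset.coe_range, Multiset.coe_range, add_tsub_cancel_of_le h]

theorem exists_optimal_block_value_eq [Finite I] [Nonempty I] {v : X → ℝ}
    (hg : ∀ x i, g x i ∈ Set.Icc (0 : ℝ) 1) (hcomm : ∀ x i i', q (q x i) i' = q (q x i') i)
    (hv : ∀ x, HasUniformValuePure q g x (v x)) (x : X) {ε : ℝ} (hε : 0 < ε) (L : ℕ) :
    ∃ (b : ℕ → I) (s : ℕ), L ≤ s ∧ v (play q x b s) = v x ∧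
      (v x - ε) * s ≤ payoffSum q g x b s := by
  set δ : ℕ → ℝ := fun m => 1 / ((m : ℝ) + 1)
  have hδ : Tendsto δ atTop (𝓝 0) := tendsto_one_div_add_atTop_nhds_zero_nat
  choose b hb using fun m => (hv x).1 (δ m) (by positivity)
  have hlate : ∀ m, ∀ᶠ n in atTop, v x - 2 * δ m < payoff q g x (b m) n := fun m =>
    eventually_lt_of_lt_liminf (by linarith [hb m, show 0 < δ m by positivity])
      (isBoundedUnder_of ⟨0, payoff_nonneg hg x (b m)⟩)
  choose N hN using fun m => eventually_atTop.1 (hlate m)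
  set s : ℕ → ℕ := fun m => max (N m) L
  obtain ⟨φ, hφ⟩ :=
    wellQuasiOrdered_le.exists_monotone_subseq fun m => (Multiset.range (s m)).map (b m)
  have hδφ : Tendsto (δ ∘ φ) atTop (𝓝 0) := hδ.comp φ.strictMono.tendsto_atTop
  have hvalue := value_eq_of_reachable_chain hg hv hδφ (y := fun j => play q x (b (φ j)) (s (φ j)))
    (fun j => ⟨_, _, rfl⟩) (fun j j' hj => reachable_play_of_map_range_le hcomm (hφ j j' hj))
    (fun j => le_value_play hg hv (hb (φ j)) _)
  obtain ⟨j, hj⟩ := (hδφ.eventually (gt_mem_nhds (half_pos hε))).exists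
  refine ⟨b (φ j), s (φ j), le_max_right _ _, hvalue j, ?_⟩
  rw [← payoff_mul_natCast]
  have hlong := hN (φ j) (s (φ j)) (le_max_left _ _)
  simp only [Function.comp_apply] at hj
  exact mul_le_mul_of_nonneg_right (by linarith) (Nat.cast_nonneg _)

/-- Stage `k` of the concatenation of blocks: the strategy played so far and the time at which
it hands over to the next block, which `blk` chooses from the current state and time. -/
def concatBlocks (q : X → I → X) (x : X) (blk : X → ℕ → (ℕ → I) × ℕ) (a₀ : ℕ → I) :
    ℕ → (ℕ → I) × ℕ
  | 0 => (a₀, 0)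
  | k + 1 =>
    let p := concatBlocks q x blk a₀ k
    let β := blk (play q x p.1 p.2) p.2
    (splice p.1 β.1 p.2, p.2 + β.2)

theorem exists_concat_blocks [Nonempty I] (x : X) (blk : X → ℕ → (ℕ → I) × ℕ)
    (hpos : ∀ y t, 0 < (blk y t).2) :
    ∃ (a : ℕ → I) (T : ℕ → ℕ), T 0 = 0 ∧ StrictMono T ∧ ∀ k,
      T (k + 1) = T k + (blk (play q x a (T k)) (T k)).2 ∧
      ∀ t < (blk (play q x a (T k)) (T k)).2,
        a (T k + t) = (blk (play q x a (T k)) (T k)).1 t := by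
  set σ := fun k => (concatBlocks q x blk (fun _ => Classical.arbitrary I) k).1
  set T := fun k => (concatBlocks q x blk (fun _ => Classical.arbitrary I) k).2
  have hT : ∀ k, T (k + 1) = T k + (blk (play q x (σ k) (T k)) (T k)).2 := fun _ => rfl
  have hσ : ∀ k, σ (k + 1) = splice (σ k) (blk (play q x (σ k) (T k)) (T k)).1 (T k) :=
    fun _ => rfl
  have hmono : StrictMono T := strictMono_nat_of_lt_succ fun k => by
    rw [hT]; exact Nat.lt_add_of_pos_right (hpos _ _)
  have hstable : ∀ j k t, j ≤ k → t < T j → σ k t = σ j t := by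
    intro j k t hjk ht
    induction k, hjk using Nat.le_induction with
    | base => rfl
    | succ k hjk ih => rw [hσ, splice, if_pos (ht.trans_le (hmono.monotone hjk)), ih]
  set a : ℕ → I := fun t => σ (t + 1) t
  have ha : ∀ k t, t < T k → a t = σ k t := by
    intro k t ht
    rcases le_total (t + 1) k with h | h
    · exact (hstable _ _ _ h ((Nat.lt_succ_self t).trans_le (hmono.le_apply))).symm
    · exact hstable _ _ _ h ht
  have hplay : ∀ k, play q x a (T k) = play q x (σ k) (T k) := fun k =>
    play_congr fun t ht => ha k t ht
  refine ⟨a, T, rfl, hmono, fun k => ?_⟩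
  rw [hplay]
  refine ⟨hT k, fun t ht => ?_⟩
  rw [ha (k + 1) _ (by rw [hT]; omega), hσ, splice, if_neg (by omega), Nat.add_sub_cancel_left]

theorem sub_two_div_le_payoff_add (hg : ∀ x i, g x i ∈ Set.Icc (0 : ℝ) 1) {x : X}
    {a : ℕ → I} {m n : ℕ} {c : ℝ} (hc : c ≤ 1) (hmn : m ^ 2 < n)
    (hblock : (c - 1 / (m + 1)) * n ≤ payoffSum q g (play q x a m) (fun t => a (m + t)) n) :
    c - 2 / (m + 1) ≤ payoff q g x a (m + n) := by
  set e : ℝ := 1 / (m + 1)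
  have hpos : (0 : ℝ) < (m + n : ℕ) := by
    exact_mod_cast Nat.add_pos_right m ((Nat.zero_le _).trans_lt hmn)
  have he : 0 ≤ e := by positivity
  have hem : (m : ℝ) ≤ e * (m + n) := by
    have : (m : ℝ) ^ 2 + 1 ≤ n := by exact_mod_cast hmn
    rw [one_div_mul_eq_div, le_div_iff₀ (by positivity)]
    nlinarith
  rw [show (2 : ℝ) / (m + 1) = 2 * e by ring, ← mul_le_mul_iff_of_pos_right hpos,
    payoff_mul_natCast, payoffSum_add]
  have hS := payoffSum_nonneg (q := q) hg x a m
  push_cast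
  nlinarith [mul_le_mul_of_nonneg_right hc (Nat.cast_nonneg (α := ℝ) m)]

end DeterministicMDP

/-- In a deterministic commutative MDP having a uniform value in pure strategies at every
initial state, every initial state admits a partially `0`-optimal pure strategy: a pure strategy
whose expected average payoffs have limsup equal to the uniform value. -/
theorem exists_partially_zero_optimal_pure
    {X I : Type*} [Fintype I] [Nonempty I]
    (q : X → I → X) (g : X → I → ℝ)
    (hg : ∀ x i, g x i ∈ Set.Icc (0 : ℝ) 1)
    (hcomm : ∀ x i i', q (q x i) i' = q (q x i') i)
    (v : X → ℝ) (hv : ∀ x, HasUniformValuePure q g x (v x))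
    (x₁ : X) :
    ∃ a : ℕ → I, limsup (fun n => payoff q g x₁ a n) atTop = v x₁ := by
  choose B S hSL hSv hSsum using fun (y : X) (t : ℕ) =>
    exists_optimal_block_value_eq hg hcomm hv y (ε := 1 / ((t : ℝ) + 1)) (by positivity) (t ^ 2 + 1)
  obtain ⟨a, T, hT0, hT, hblk⟩ := exists_concat_blocks (q := q) x₁ (fun y t => (B y t, S y t))
    (fun y t => by have := hSL y t; dsimp only; omega)
  have hvT : ∀ k, v (play q x₁ a (T k)) = v x₁ := by
    intro k
    induction k with
    | zero => rw [hT0]; rfl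
    | succ k ih => rw [(hblk k).1, play_add, play_congr (hblk k).2, hSv, ih]
  have hcheck : ∀ k, v x₁ - 2 / ((T k : ℝ) + 1) ≤ payoff q g x₁ a (T (k + 1)) := fun k => by
    rw [(hblk k).1]
    refine sub_two_div_le_payoff_add hg ((hv x₁).le_one hg)
      (by have := hSL (play q x₁ a (T k)) (T k); omega) ?_
    rw [payoffSum_congr (hblk k).2, ← hvT k]
    exact hSsum _ _
  refine ⟨a, le_antisymm ((hv x₁).limsup_payoff_le hg a) ?_⟩
  refine le_limsup_of_tendsto_of_le_comp (hT.tendsto_atTop.comp (tendsto_add_atTop_nat 1))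
    (isBoundedUnder_of ⟨1, payoff_le_one hg x₁ a⟩) ?_ hcheck
  simpa [div_eq_mul_inv] using (tendsto_const_nhds (x := v x₁)).sub
    ((tendsto_one_div_add_atTop_nhds_zero_nat (𝕜 := ℝ)).comp hT.tendsto_atTop |>.const_mul 2)
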